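/- arXiv:2404.09899 — 2 statements merged into one kernel-verified Lean document; each statement's English description precedes it below -/
import Mathlib

section
/- Let A be a type and R a commutative ring. Let ∂ be the unique R-derivation of MvPolynomial (A × ℕ) R determined by ∂(X(a, j)) = X(a, j+1) for all a ∈ A and j ∈ ℕ. Let w : A × ℕ → ℤ be the weight function w(a, j) = j − 1. Then for every r ∈ ℕ and every polynomial P that is weighted homogeneous of degree d ∈ ℤ with respect to w, the r-th iterate ∂^r(P) is weighted homogeneous of degree d + r with respect to w. -/
open MvPolynomial

lemma weight_sub_single {σ : Type*} (w : σ → ℤ) (s : σ →₀ ℕ) (i : σ) (hi : s i ≠ 0) :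
    Finsupp.weight w (s - Finsupp.single i 1) = Finsupp.weight w s - w i := by
  have h : (s - Finsupp.single i 1) + Finsupp.single i 1 = s := by
    ext j
    rcases eq_or_ne j i with rfl | hj
    · simp [Nat.sub_add_cancel (Nat.one_le_iff_ne_zero.mpr hi)]
    · simp [Finsupp.single_apply, Ne.symm hj]
  have := congrArg (Finsupp.weight w) h
  rw [map_add] at this
  have hsing : Finsupp.weight w (Finsupp.single i 1) = w i := by
    simp [Finsupp.weight_apply, Finsupp.sum_single_index]
  omega

lemma partial_step {A : Type*} {R : Type*} [CommRing R]
    (D : Derivation R (MvPolynomial (A × ℕ) R) (MvPolynomial (A × ℕ) R))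
    (hD : ∀ (a : A) (j : ℕ), D (X (a, j)) = X (a, j + 1))
    (w : A × ℕ → ℤ) (hw : ∀ (a : A) (j : ℕ), w (a, j) = (j : ℤ) - 1)
    (d : ℤ) (P : MvPolynomial (A × ℕ) R)
    (hP : P.IsWeightedHomogeneous w d) :
    MvPolynomial.IsWeightedHomogeneous w (D P) (d + 1) := by
  have hDeq : D = mkDerivation R (fun p : A × ℕ => X (p.1, p.2 + 1)) := by
    apply derivation_ext
    rintro ⟨a, j⟩
    rw [hD a j, mkDerivation_X]
  rw [hDeq]
  rw [← P.support_sum_monomial_coeff, map_sum, ← mem_weightedHomogeneousSubmodule]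
  apply Submodule.sum_mem
  intro m hm
  rw [mkDerivation_monomial]
  apply Submodule.smul_mem
  rw [Finsupp.sum]
  apply Submodule.sum_mem
  intro i hi
  rw [mem_weightedHomogeneousSubmodule, smul_eq_mul]
  have hwm : Finsupp.weight w m = d := hP (MvPolynomial.mem_support_iff.mp hm)
  have hwi : Finsupp.weight w (m - Finsupp.single i 1) = d - w i :=
    weight_sub_single w m i (Finsupp.mem_support_iff.mp hi) |>.trans (by rw [hwm])
  have h1 : IsWeightedHomogeneous w (monomial (m - Finsupp.single i 1) ((m i : R)))
      (d - w i) := isWeightedHomogeneous_monomial _ _ _ hwi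
  have h2 : IsWeightedHomogeneous w (X (i.1, i.2 + 1) : MvPolynomial (A × ℕ) R)
      (w (i.1, i.2 + 1)) := isWeightedHomogeneous_X _ _ _
  have := h1.mul h2
  convert this using 1
  obtain ⟨a, j⟩ := i
  rw [hw a (j + 1), hw a j]
  push_cast
  ring

/-- The derivation `∂` of `MvPolynomial (A × ℕ) R` with `∂ (X (a, j)) = X (a, j+1)`
raises the weighted degree by one: if `P` is weighted homogeneous of degree `d` with
respect to the weight `w (a, j) = j - 1`, then `∂^r P` is weighted homogeneous of
degree `d + r`. -/
theorem iterate_partial_isWeightedHomogeneous {A : Type*} {R : Type*} [CommRing R]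
    (D : Derivation R (MvPolynomial (A × ℕ) R) (MvPolynomial (A × ℕ) R))
    (hD : ∀ (a : A) (j : ℕ), D (X (a, j)) = X (a, j + 1))
    (w : A × ℕ → ℤ) (hw : ∀ (a : A) (j : ℕ), w (a, j) = (j : ℤ) - 1)
    (r : ℕ) (d : ℤ) (P : MvPolynomial (A × ℕ) R)
    (hP : P.IsWeightedHomogeneous w d) :
    MvPolynomial.IsWeightedHomogeneous w ((D.toLinearMap ^ r) P) (d + r) := by
  induction r with
  | zero => simpa using hP
  | succ n ih =>
    rw [pow_succ', Module.End.mul_apply]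
    have := partial_step D hD w hw (d + n) _ ih
    have hdeg : d + ((n : ℤ) + 1) = d + n + 1 := by ring
    rw [show ((n + 1 : ℕ) : ℤ) = (n : ℤ) + 1 by push_cast; ring, hdeg]
    exact this
end

section
/- Let A be a type and R a commutative ring. Let ∂ be the unique R-derivation of MvPolynomial (A × ℕ) R with ∂(X(a, j)) = X(a, j+1), and let w : A × ℕ → ℤ be the weight function w(a, j) = j − 1. Define N(A) to be the set of polynomials that are weighted homogeneous of degree −1 with respect to w. Then N(A) is closed under the product P ▹ Q := P · ∂(Q) (i.e. if P and Q are weighted homogeneous of degree −1, so is P · ∂(Q)), and this product satisfies on N(A) both the left pre-Lie identity P ▹ (Q ▹ S) − (P ▹ Q) ▹ S = Q ▹ (P ▹ S) − (Q ▹ P) ▹ S and the right-NAP identity (P ▹ Q) ▹ S = (P ▹ S) ▹ Q; hence N(A) is a Novikov algebra. -/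
open MvPolynomial

/-! A derivation is determined by its values on the variables, and on a monomial
`x^s` it produces the terms `s i • x^(s - eᵢ) • ∂xᵢ`. Since `∂` raises the weight of every
variable by one, it raises the weight of every monomial, hence of every homogeneous polynomial,
by one; so `P · ∂Q` has weight `-1 + (-1 + 1) = -1`. The pre-Lie and right-NAP identities hold
on all of the polynomial algebra: the first is the Leibniz rule for `∂` and the second is
commutativity. -/

namespace MvPolynomial

theorem IsWeightedHomogeneous.derivation {σ R M : Type*} [CommSemiring R] [AddCommMonoid M]
    {w : σ → M} {e : M} (D : Derivation R (MvPolynomial σ R) (MvPolynomial σ R))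
    (hD : ∀ i, (D (X i)).IsWeightedHomogeneous w (w i + e))
    {p : MvPolynomial σ R} {d : M} (hp : p.IsWeightedHomogeneous w d) :
    (D p).IsWeightedHomogeneous w (d + e) := by
  have hD_eq : D = mkDerivation R fun i => D (X i) := derivation_ext fun i => by simp
  rw [hD_eq, p.as_sum, map_sum]
  refine IsWeightedHomogeneous.sum _ _ _ fun s hs => ?_
  rw [mkDerivation_monomial, smul_eq_C_mul, ← hp (mem_support_iff.mp hs)]
  refine (IsWeightedHomogeneous.sum _ _ _ fun i hi => ?_).C_mul _
  simp only [smul_eq_mul]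
  rw [← Finsupp.weight_sub_single_add (Finsupp.mem_support_iff.mp hi), add_assoc]
  exact (isWeightedHomogeneous_monomial _ _ _ rfl).mul (hD i)

end MvPolynomial

theorem Derivation.mul_apply_leftPreLie {R A : Type*} [CommSemiring R] [CommRing A]
    [Algebra R A] (D : Derivation R A A) (a b c : A) :
    a * D (b * D c) - a * D b * D c = b * D (a * D c) - b * D a * D c := by
  simp only [Derivation.leibniz, smul_eq_mul]
  ring

/-- The weight-(−1) homogeneous component `N(A)` of the polynomial algebra
`MvPolynomial (A × ℕ) R` (with weight `w (a, j) = j - 1`) is closed under the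
product `P ▹ Q := P * ∂ Q`, where `∂ (X (a, j)) = X (a, j+1)`, and this product
satisfies the left pre-Lie identity and the right-NAP identity on `N(A)`; hence
`N(A)` is a Novikov algebra. -/
theorem freeNovikov_is_novikov {A : Type*} {R : Type*} [CommRing R]
    (D : Derivation R (MvPolynomial (A × ℕ) R) (MvPolynomial (A × ℕ) R))
    (hD : ∀ (a : A) (j : ℕ), D (X (a, j)) = X (a, j + 1))
    (w : A × ℕ → ℤ) (hw : ∀ (a : A) (j : ℕ), w (a, j) = (j : ℤ) - 1) :
    (∀ P Q : MvPolynomial (A × ℕ) R,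
      P.IsWeightedHomogeneous w (-1) → Q.IsWeightedHomogeneous w (-1) →
        (P * D Q).IsWeightedHomogeneous w (-1)) ∧
    (∀ P Q S : MvPolynomial (A × ℕ) R,
      P.IsWeightedHomogeneous w (-1) → Q.IsWeightedHomogeneous w (-1) →
      S.IsWeightedHomogeneous w (-1) →
        P * D (Q * D S) - (P * D Q) * D S = Q * D (P * D S) - (Q * D P) * D S) ∧
    (∀ P Q S : MvPolynomial (A × ℕ) R,
      P.IsWeightedHomogeneous w (-1) → Q.IsWeightedHomogeneous w (-1) →
      S.IsWeightedHomogeneous w (-1) →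
        (P * D Q) * D S = (P * D S) * D Q) := by
  have hDX : ∀ i, (D (X i)).IsWeightedHomogeneous w (w i + 1) := by
    rintro ⟨a, j⟩
    rw [hD, hw, show (j : ℤ) - 1 + 1 = (j + 1 : ℕ) - 1 by push_cast; ring, ← hw]
    exact isWeightedHomogeneous_X R w _
  refine ⟨fun P Q hP hQ => ?_, fun P Q S _ _ _ => D.mul_apply_leftPreLie P Q S,
    fun P Q S _ _ _ => by ring⟩
  simpa using hP.mul (hQ.derivation D hDX)
end
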